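/- arXiv:2201.06320 — 8 statements merged into one kernel-verified Lean document; each statement's English description precedes it below -/
import Mathlib

section
/- Let Γ be a simple graph on a vertex set V. If an equivalence class of the relation ~ contains two distinct adjacent vertices, then any two distinct vertices of that class are adjacent. Precisely: if u, v, w, x are vertices with u ~ v, u ~ w, u ~ x, if u ≠ v and u, v are adjacent, and if w ≠ x, then w and x are adjacent. Hence every ~-class is either a clique or an independent set of Γ. -/
/-- The link of a vertex: the set of vertices adjacent to it. -/
def SimpleGraph.lk {V : Type*} (Γ : SimpleGraph V) (v : V) : Set V :=
  {w | Γ.Adj v w}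

/-- The star of a vertex: its link together with the vertex itself. -/
def SimpleGraph.st {V : Type*} (Γ : SimpleGraph V) (v : V) : Set V :=
  Γ.lk v ∪ {v}

/-- The equivalence relation `u ~ v ↔ lk(u) ⊆ st(v) ∧ lk(v) ⊆ st(u)`. -/
def SimpleGraph.linkStarEquiv {V : Type*} (Γ : SimpleGraph V) (u v : V) : Prop :=
  Γ.lk u ⊆ Γ.st v ∧ Γ.lk v ⊆ Γ.st u

/-- If a `~`-equivalence class contains two distinct adjacent vertices, then any
two distinct vertices of that class are adjacent; hence every `~`-class is a
clique or an independent set. -/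
theorem class_clique_of_adjacent_pair {V : Type*} (Γ : SimpleGraph V)
    (u v w x : V) (huv : Γ.linkStarEquiv u v) (huw : Γ.linkStarEquiv u w)
    (hux : Γ.linkStarEquiv u x) (hne : u ≠ v) (hadj : Γ.Adj u v)
    (hwx : w ≠ x) :
    Γ.Adj w x := by
  -- key: any y ~ u with y ≠ u is adjacent to u
  have key : ∀ y : V, Γ.linkStarEquiv u y → y ≠ u → Γ.Adj u y := by
    intro y huy hy
    have hv : v ∈ Γ.st y := huy.1 hadj
    rcases hv with h | h
    · -- Adj y v, so y ∈ lk v ⊆ st u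
      have : y ∈ Γ.st u := huv.2 h.symm
      rcases this with h2 | h2
      · exact h2
      · exact absurd h2 hy
    · -- v = y
      simp only [Set.mem_singleton_iff] at h
      rw [← h]; exact hadj
  by_cases hw : w = u
  · subst hw
    exact key x hux (fun h => hwx h.symm)
  · by_cases hx : x = u
    · subst hx
      exact (key w huw hw).symm
    · have haw : Γ.Adj u w := key w huw hw
      have hax : Γ.Adj u x := key x hux hx
      have hw' : w ∈ Γ.st x := hux.1 haw
      rcases hw' with h | h
      · exact h.symm
      · exact absurd h hwx
end

section
/- Let Γ be a simple graph on a vertex set V, let u be a vertex, and let [u] = {y ∈ V : y ~ u} be its ~-class. Then for every vertex v with u ~ v one has lk(u) \ [u] = lk(v) \ [u] and lk(u) ∪ [u] = lk(v) ∪ [u]; in particular the sets lk([u]) := lk(u) \ [u] and st([u]) := lk(u) ∪ [u] do not depend on the choice of the representative u of the class. -/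
/-- The `~`-class of a vertex `u`. -/
def SimpleGraph.linkStarClass {V : Type*} (Γ : SimpleGraph V) (u : V) : Set V :=
  {y | Γ.linkStarEquiv y u}

/-- For any vertex `v` equivalent to `u`, `lk(u) \ [u] = lk(v) \ [u]` and
`lk(u) ∪ [u] = lk(v) ∪ [u]`; hence `lk([u])` and `st([u])` are independent of
the choice of representative of the class `[u]`. -/
theorem lk_class_st_class_well_defined {V : Type*} (Γ : SimpleGraph V)
    (u v : V) (huv : Γ.linkStarEquiv u v) :
    Γ.lk u \ Γ.linkStarClass u = Γ.lk v \ Γ.linkStarClass u ∧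
      Γ.lk u ∪ Γ.linkStarClass u = Γ.lk v ∪ Γ.linkStarClass u := by
  have hu : u ∈ Γ.linkStarClass u := by
    constructor <;> exact fun x hx => Set.mem_union_left _ hx
  have hv : v ∈ Γ.linkStarClass u := ⟨huv.2, huv.1⟩
  constructor
  · ext x
    constructor
    · rintro ⟨hx, hnx⟩
      rcases huv.1 hx with h | h
      · exact ⟨h, hnx⟩
      · exact absurd (h ▸ hv) hnx
    · rintro ⟨hx, hnx⟩
      rcases huv.2 hx with h | h
      · exact ⟨h, hnx⟩
      · exact absurd (h ▸ hu) hnx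
  · ext x
    constructor
    · rintro (hx | hx)
      · rcases huv.1 hx with h | h
        · exact Or.inl h
        · exact Or.inr (h ▸ hv)
      · exact Or.inr hx
    · rintro (hx | hx)
      · rcases huv.2 hx with h | h
        · exact Or.inl h
        · exact Or.inr (h ▸ hu)
      · exact Or.inr hx
end

section
/- Let Γ be a simple graph on a vertex set V and let v, w be distinct vertices with lk(v) ⊆ st(w). Then the transvection sending v to vw is an automorphism of the right-angled Artin group A_Γ: there exists a group automorphism φ of A_Γ such that φ(of v) = of v * of w and φ(of u) = of u for every vertex u ≠ v. -/
/-- The set of commutator relators of a right-angled Artin group. -/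
def raagRels {V : Type*} (Γ : SimpleGraph V) : Set (FreeGroup V) :=
  {r | ∃ u v : V, Γ.Adj u v ∧
    r = FreeGroup.of u * FreeGroup.of v * (FreeGroup.of u)⁻¹ * (FreeGroup.of v)⁻¹}

/-- The right-angled Artin group of the graph `Γ`. -/
abbrev RAAG {V : Type*} (Γ : SimpleGraph V) : Type _ :=
  PresentedGroup (raagRels Γ)

/-- The canonical generator of `RAAG Γ` corresponding to a vertex. -/
def RAAG.of {V : Type*} (Γ : SimpleGraph V) (v : V) : RAAG Γ :=
  PresentedGroup.of v

/-!
The substitution `v ↦ v w^n` respects the defining relations: the only relations involving `v`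
say that `v` commutes with the vertices of `lk(v)`, and `w` commutes with each of them as well
because `lk(v) ⊆ st(w)`. This gives endomorphisms `T n` of `A_Γ`, and since `v ≠ w` they satisfy
`T n ∘ T m = T (n + m)`, so `T 1` is an automorphism with inverse `T (-1)`.
-/

namespace RAAG

variable {V : Type*} {Γ : SimpleGraph V} {G : Type*} [Group G]

theorem commute_of_adj {u v : V} (h : Γ.Adj u v) : Commute (of Γ u) (of Γ v) := by
  rw [← commutatorElement_eq_one_iff_commute, commutatorElement_def]
  exact PresentedGroup.one_of_mem (rels := raagRels Γ) ⟨u, v, h, rfl⟩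

theorem commute_of_mem_st {u w : V} (h : u ∈ Γ.st w) : Commute (of Γ w) (of Γ u) := by
  rcases h with h | rfl
  · exact commute_of_adj h
  · exact Commute.refl _

variable (Γ) in
def lift (f : V → G) (hf : ∀ a b, Γ.Adj a b → Commute (f a) (f b)) : RAAG Γ →* G :=
  PresentedGroup.toGroup (f := f) <| by
    rintro _ ⟨a, b, hab, rfl⟩
    simp [(hf a b hab).eq]

@[simp]
theorem lift_of (f : V → G) (hf : ∀ a b, Γ.Adj a b → Commute (f a) (f b)) (u : V) :
    lift Γ f hf (of Γ u) = f u :=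
  PresentedGroup.toGroup.of (f := f) _

theorem hom_ext {φ ψ : RAAG Γ →* G} (h : ∀ u, φ (of Γ u) = ψ (of Γ u)) : φ = ψ :=
  PresentedGroup.ext h

variable [DecidableEq V] {v w : V}

theorem commute_update_of_lk_subset_st (hlk : Γ.lk v ⊆ Γ.st w) (n : ℤ) (a b : V)
    (hab : Γ.Adj a b) :
    Commute (Function.update (of Γ) v (of Γ v * of Γ w ^ n) a)
      (Function.update (of Γ) v (of Γ v * of Γ w ^ n) b) := by
  have hv : ∀ {b}, Γ.Adj v b → Commute (of Γ v * of Γ w ^ n) (of Γ b) := fun hb =>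
    (commute_of_adj hb).mul_left ((commute_of_mem_st (hlk hb)).zpow_left n)
  by_cases ha : a = v <;> by_cases hb : b = v
  · exact absurd (ha ▸ hb ▸ hab) Γ.irrefl
  · subst ha; simpa [hb] using hv hab
  · subst hb; simpa [ha] using (hv hab.symm).symm
  · simpa [ha, hb] using commute_of_adj hab

def transvection (hlk : Γ.lk v ⊆ Γ.st w) (n : ℤ) : RAAG Γ →* RAAG Γ :=
  lift Γ _ (commute_update_of_lk_subset_st hlk n)

theorem transvection_of_self (hlk : Γ.lk v ⊆ Γ.st w) (n : ℤ) :
    transvection hlk n (of Γ v) = of Γ v * of Γ w ^ n := by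
  simp [transvection]

theorem transvection_of_ne (hlk : Γ.lk v ⊆ Γ.st w) (n : ℤ) {u : V} (hu : u ≠ v) :
    transvection hlk n (of Γ u) = of Γ u := by
  simp [transvection, hu]

theorem transvection_comp (hne : v ≠ w) (hlk : Γ.lk v ⊆ Γ.st w) (n m : ℤ) :
    (transvection hlk n).comp (transvection hlk m) = transvection hlk (n + m) := by
  refine hom_ext fun u => ?_
  rcases eq_or_ne u v with rfl | hu
  · simp [transvection_of_self, transvection_of_ne _ _ hne.symm, zpow_add, mul_assoc]
  · simp [transvection_of_ne _ _ hu]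

theorem transvection_zero (hlk : Γ.lk v ⊆ Γ.st w) : transvection hlk 0 = MonoidHom.id _ :=
  hom_ext fun u => by
    rcases eq_or_ne u v with rfl | hu
    · simp [transvection_of_self]
    · simp [transvection_of_ne _ _ hu]

end RAAG

open RAAG in
/-- If `lk(v) ⊆ st(w)` then the transvection `v ↦ vw` is an automorphism of
the right-angled Artin group `A_Γ`. -/
theorem raag_transvection_aut {V : Type*} (Γ : SimpleGraph V) (v w : V)
    (hne : v ≠ w) (hlk : Γ.lk v ⊆ Γ.st w) :
    ∃ φ : MulAut (RAAG Γ),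
      φ (RAAG.of Γ v) = RAAG.of Γ v * RAAG.of Γ w ∧
        ∀ u : V, u ≠ v → φ (RAAG.of Γ u) = RAAG.of Γ u := by
  classical
  have inverse (n : ℤ) : (transvection hlk n).comp (transvection hlk (-n)) = MonoidHom.id _ := by
    rw [transvection_comp hne, add_neg_cancel, transvection_zero]
  refine ⟨(transvection hlk 1).toMulEquiv (transvection hlk (-1)) ?_ (inverse 1), ?_, ?_⟩
  · simpa using inverse (-1)
  · simpa using transvection_of_self hlk 1
  · exact fun u hu => transvection_of_ne hlk 1 hu
end

section
/- Let Γ be a simple graph on a vertex set V, let v be a vertex, and let C ⊆ V \ st(v) be a set of vertices closed under adjacency in the complement of st(v), i.e. whenever x ∈ C and y ∈ V \ st(v) is adjacent to x, then y ∈ C (for instance, C a union of connected components of Γ \ st(v)). Then the partial conjugation by v on C is an automorphism of the right-angled Artin group A_Γ: there exists a group automorphism φ of A_Γ such that φ(of u) = (of v) * (of u) * (of v)⁻¹ for every u ∈ C and φ(of u) = of u for every vertex u ∉ C. -/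
lemma RAAG.adj_commute {V : Type*} (Γ : SimpleGraph V) {a b : V} (h : Γ.Adj a b) :
    Commute (RAAG.of Γ a) (RAAG.of Γ b) := by
  have hr : (FreeGroup.of a * FreeGroup.of b * (FreeGroup.of a)⁻¹ * (FreeGroup.of b)⁻¹ :
      FreeGroup V) ∈ Subgroup.normalClosure (raagRels Γ) :=
    Subgroup.subset_normalClosure ⟨a, b, h, rfl⟩
  have h1 : PresentedGroup.mk (raagRels Γ)
      (FreeGroup.of a * FreeGroup.of b * (FreeGroup.of a)⁻¹ * (FreeGroup.of b)⁻¹) = 1 :=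
    (QuotientGroup.eq_one_iff _).2 hr
  simp only [map_mul, map_inv] at h1
  have h2 : RAAG.of Γ a * RAAG.of Γ b * (RAAG.of Γ a)⁻¹ * (RAAG.of Γ b)⁻¹ = 1 := h1
  show RAAG.of Γ a * RAAG.of Γ b = RAAG.of Γ b * RAAG.of Γ a
  calc RAAG.of Γ a * RAAG.of Γ b
      = (RAAG.of Γ a * RAAG.of Γ b * (RAAG.of Γ a)⁻¹ * (RAAG.of Γ b)⁻¹) *
        (RAAG.of Γ b * RAAG.of Γ a) := by group
    _ = RAAG.of Γ b * RAAG.of Γ a := by rw [h2]; group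

/-- If `C` is a set of vertices outside `st(v)` closed under adjacency in the
complement of `st(v)` (e.g. a union of connected components of `Γ ∖ st(v)`),
then partial conjugation by `v` on `C` is an automorphism of `A_Γ`. -/
theorem raag_partial_conjugation_aut {V : Type*} (Γ : SimpleGraph V) (v : V)
    (C : Set V) (hC : C ⊆ Set.univ \ Γ.st v)
    (hclosed : ∀ x ∈ C, ∀ y : V, y ∉ Γ.st v → Γ.Adj x y → y ∈ C) :
    ∃ φ : MulAut (RAAG Γ),
      (∀ u ∈ C, φ (RAAG.of Γ u) = RAAG.of Γ v * RAAG.of Γ u * (RAAG.of Γ v)⁻¹) ∧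
        ∀ u : V, u ∉ C → φ (RAAG.of Γ u) = RAAG.of Γ u := by
  classical
  set w : RAAG Γ := RAAG.of Γ v with hw
  -- a vertex adjacent to a vertex of C which is not in C must be adjacent to v
  have hmem : ∀ x ∈ C, ∀ y : V, Γ.Adj x y → y ∉ C → Γ.Adj v y := by
    intro x hx y hxy hy
    have hys : y ∈ Γ.st v := by
      by_contra hns
      exact hy (hclosed x hx y hns hxy)
    rcases hys with h | h
    · exact h
    · simp only [Set.mem_singleton_iff] at h
      subst h
      exact absurd (Or.inl (Γ.adj_symm hxy)) (hC hx).2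
  let f : V → RAAG Γ := fun u => if u ∈ C then w * RAAG.of Γ u * w⁻¹ else RAAG.of Γ u
  let g : V → RAAG Γ := fun u => if u ∈ C then w⁻¹ * RAAG.of Γ u * w else RAAG.of Γ u
  have fcomm : ∀ {x y : V}, Γ.Adj x y → Commute (f x) (f y) := by
    intro x y hxy
    have hxy' := RAAG.adj_commute Γ hxy
    by_cases hx : x ∈ C <;> by_cases hy : y ∈ C <;>
      simp only [f, hx, hy, if_pos, if_neg, if_true, if_false]
    · exact hxy'.map (MulAut.conj w).toMonoidHom
    · -- x ∈ C, y ∉ C : y adjacent to v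
      have hyv : Commute (RAAG.of Γ y) w := (RAAG.adj_commute Γ (hmem x hx y hxy hy)).symm
      exact ((hyv.mul_right hxy'.symm).mul_right hyv.inv_right).symm
    · have hxv : Commute (RAAG.of Γ x) w :=
        (RAAG.adj_commute Γ (hmem y hy x (Γ.adj_symm hxy) hx)).symm
      exact (hxv.mul_right hxy').mul_right hxv.inv_right
    · exact hxy'
  have gcomm : ∀ {x y : V}, Γ.Adj x y → Commute (g x) (g y) := by
    intro x y hxy
    have hxy' := RAAG.adj_commute Γ hxy
    by_cases hx : x ∈ C <;> by_cases hy : y ∈ C <;>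
      simp only [g, hx, hy, if_pos, if_neg, if_true, if_false]
    · exact hxy'.map (MulAut.conj w⁻¹).toMonoidHom
    · have hyv : Commute (RAAG.of Γ y) w := (RAAG.adj_commute Γ (hmem x hx y hxy hy)).symm
      exact ((hyv.inv_right.mul_right hxy'.symm).mul_right hyv).symm
    · have hxv : Commute (RAAG.of Γ x) w :=
        (RAAG.adj_commute Γ (hmem y hy x (Γ.adj_symm hxy) hx)).symm
      exact (hxv.inv_right.mul_right hxy').mul_right hxv
    · exact hxy'
  have hfrel : ∀ r ∈ raagRels Γ, FreeGroup.lift f r = 1 := by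
    rintro r ⟨x, y, hxy, rfl⟩
    simp only [map_mul, map_inv, FreeGroup.lift_apply_of]
    rw [(fcomm hxy).eq]; group
  have hgrel : ∀ r ∈ raagRels Γ, FreeGroup.lift g r = 1 := by
    rintro r ⟨x, y, hxy, rfl⟩
    simp only [map_mul, map_inv, FreeGroup.lift_apply_of]
    rw [(gcomm hxy).eq]; group
  let F : RAAG Γ →* RAAG Γ := PresentedGroup.toGroup hfrel
  let G : RAAG Γ →* RAAG Γ := PresentedGroup.toGroup hgrel
  have hFof : ∀ u : V, F (RAAG.of Γ u) = f u := fun u => PresentedGroup.toGroup.of hfrel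
  have hGof : ∀ u : V, G (RAAG.of Γ u) = g u := fun u => PresentedGroup.toGroup.of hgrel
  have hvC : v ∉ C := fun h => (hC h).2 (Or.inr rfl)
  have hFv : F w = w := by rw [hw, hFof v]; simp only [f, hvC, if_neg, if_false]
  have hGv : G w = w := by rw [hw, hGof v]; simp only [g, hvC, if_neg, if_false]
  have hFG : F.comp G = MonoidHom.id _ := by
    apply PresentedGroup.ext
    intro x
    simp only [MonoidHom.comp_apply, MonoidHom.id_apply]
    show F (G (RAAG.of Γ x)) = RAAG.of Γ x
    rw [hGof x]
    by_cases hx : x ∈ C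
    · simp only [g, hx, if_pos]
      rw [map_mul, map_mul, map_inv, hFv, hFof x]
      simp only [f, hx, if_pos]
      group
    · simp only [g, hx, if_neg, if_false]
      rw [hFof x]
      simp only [f, hx, if_neg, if_false]
  have hGF : G.comp F = MonoidHom.id _ := by
    apply PresentedGroup.ext
    intro x
    simp only [MonoidHom.comp_apply, MonoidHom.id_apply]
    show G (F (RAAG.of Γ x)) = RAAG.of Γ x
    rw [hFof x]
    by_cases hx : x ∈ C
    · simp only [f, hx, if_pos]
      rw [map_mul, map_mul, map_inv, hGv, hGof x]
      simp only [g, hx, if_pos]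
      group
    · simp only [f, hx, if_neg, if_false]
      rw [hGof x]
      simp only [g, hx, if_neg, if_false]
  refine ⟨⟨⟨F, G, ?_, ?_⟩, map_mul F⟩, ?_, ?_⟩
  · intro x; exact DFunLike.congr_fun hGF x
  · intro x; exact DFunLike.congr_fun hFG x
  · intro u hu
    show F (RAAG.of Γ u) = _
    rw [hFof u]; simp only [f, hu, if_pos]
  · intro u hu
    show F (RAAG.of Γ u) = _
    rw [hFof u]; simp only [f, hu, if_neg, if_false]
end

section
/- Let Γ be a simple graph on a vertex set V and let S ⊆ V be an independent set (no two distinct vertices of S are adjacent in Γ). Then the vertices of S generate a free subgroup of the right-angled Artin group A_Γ: the group homomorphism from the free group on S to A_Γ sending each free generator s to the standard generator of A_Γ corresponding to s is injective. -/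
/-- An independent set of vertices generates a free subgroup of the
right-angled Artin group: the induced map from the free group on `S` is
injective. -/
theorem raag_independent_set_free {V : Type*} (Γ : SimpleGraph V) (S : Set V)
    (hS : ∀ s ∈ S, ∀ t ∈ S, ¬ Γ.Adj s t) :
    Function.Injective
      (FreeGroup.lift (fun s : S => RAAG.of Γ (s : V)) : FreeGroup S →* RAAG Γ) := by
  classical
  set f : V → FreeGroup S := fun v => if h : v ∈ S then FreeGroup.of (⟨v, h⟩ : S) else 1
    with hf
  have hrel : ∀ r ∈ raagRels Γ, FreeGroup.lift f r = 1 := by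
    rintro r ⟨u, v, hadj, rfl⟩
    by_cases hu : u ∈ S
    · by_cases hv : v ∈ S
      · exact absurd hadj (hS u hu v hv)
      · simp [hf, hu, hv]
    · simp [hf, hu]
  let r : RAAG Γ →* FreeGroup S := PresentedGroup.toGroup hrel
  have hcomp : r.comp (FreeGroup.lift (fun s : S => RAAG.of Γ (s : V))) =
      MonoidHom.id (FreeGroup S) := by
    apply FreeGroup.ext_hom
    intro a
    simp [r, hf, RAAG.of, PresentedGroup.toGroup.of, a.2]
  intro a b h
  have := congrArg r h
  calc a = r.comp (FreeGroup.lift (fun s : S => RAAG.of Γ (s : V))) a := by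
          rw [hcomp]; rfl
    _ = r.comp (FreeGroup.lift (fun s : S => RAAG.of Γ (s : V))) b := this
    _ = b := by rw [hcomp]; rfl
end

section
/- Let Γ be a simple graph on a vertex set V and let S ⊆ V be a set of vertices such that no vertex of S is adjacent to any vertex of the complement Sᶜ. Then A_Γ decomposes as a free product: there is a group isomorphism A_Γ ≃* A_{Γ[S]} ∗ A_{Γ[Sᶜ]} (the coproduct Monoid.Coprod) sending of v to the image of the corresponding generator of A_{Γ[S]} under the left inclusion for v ∈ S, and to the image of the corresponding generator of A_{Γ[Sᶜ]} under the right inclusion for v ∈ Sᶜ. -/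
open Monoid

section aux
variable {V : Type*} {Γ : SimpleGraph V}

lemma raag_comm {u v : V} (h : Γ.Adj u v) :
    RAAG.of Γ u * RAAG.of Γ v * (RAAG.of Γ u)⁻¹ * (RAAG.of Γ v)⁻¹ = 1 := by
  have : (PresentedGroup.mk (raagRels Γ))
      (FreeGroup.of u * FreeGroup.of v * (FreeGroup.of u)⁻¹ * (FreeGroup.of v)⁻¹) = 1 := by
    apply (QuotientGroup.eq_one_iff _).mpr
    exact Subgroup.subset_normalClosure ⟨u, v, h, rfl⟩
  simpa [RAAG.of, PresentedGroup.of] using this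

/-- map from induced RAAG to a group given a vertex map respecting adjacency. -/
lemma lift_rels {G : Type*} [Group G] {W : Type*} {Δ : SimpleGraph W} (f : W → G)
    (hf : ∀ u v : W, Δ.Adj u v → f u * f v * (f u)⁻¹ * (f v)⁻¹ = 1) :
    ∀ r ∈ raagRels Δ, FreeGroup.lift f r = 1 := by
  rintro r ⟨u, v, hadj, rfl⟩
  simpa using hf u v hadj

end aux


/-- If no vertex of `S` is adjacent to a vertex of `Sᶜ`, then the right-angled
Artin group decomposes as the free product `A_{Γ[S]} ∗ A_{Γ[Sᶜ]}`. -/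
theorem raag_free_product_decomposition {V : Type*} (Γ : SimpleGraph V)
    (S : Set V) (hS : ∀ s ∈ S, ∀ t ∉ S, ¬ Γ.Adj s t) :
    ∃ φ : RAAG Γ ≃* Coprod (RAAG (Γ.induce S)) (RAAG (Γ.induce Sᶜ)),
      (∀ v : V, ∀ h : v ∈ S,
        φ (RAAG.of Γ v) = Coprod.inl (RAAG.of (Γ.induce S) ⟨v, h⟩)) ∧
      (∀ v : V, ∀ h : v ∉ S,
        φ (RAAG.of Γ v) = Coprod.inr (RAAG.of (Γ.induce Sᶜ) ⟨v, h⟩)) := by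
  classical
  set C := Coprod (RAAG (Γ.induce S)) (RAAG (Γ.induce Sᶜ)) with hC
  -- forward generator map
  set f : V → C := fun v =>
    if h : v ∈ S then Coprod.inl (RAAG.of (Γ.induce S) ⟨v, h⟩)
    else Coprod.inr (RAAG.of (Γ.induce Sᶜ) ⟨v, h⟩) with hf
  have hfS : ∀ v (h : v ∈ S), f v = Coprod.inl (RAAG.of (Γ.induce S) ⟨v, h⟩) := by
    intro v h; simp [hf, h]
  have hfSc : ∀ v (h : v ∉ S), f v = Coprod.inr (RAAG.of (Γ.induce Sᶜ) ⟨v, h⟩) := by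
    intro v h; simp [hf, h]
  have hfrel : ∀ u v : V, Γ.Adj u v → f u * f v * (f u)⁻¹ * (f v)⁻¹ = 1 := by
    intro u v hadj
    by_cases hu : u ∈ S
    · have hv : v ∈ S := by
        by_contra hv
        exact hS u hu v hv hadj
      rw [hfS u hu, hfS v hv]
      have := raag_comm (Γ := Γ.induce S) (u := ⟨u, hu⟩) (v := ⟨v, hv⟩) hadj
      simpa using congrArg (Coprod.inl : RAAG (Γ.induce S) →* C) this
    · have hv : v ∉ S := by
        intro hv
        exact hS v hv u hu hadj.symm
      rw [hfSc u hu, hfSc v hv]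
      have := raag_comm (Γ := Γ.induce Sᶜ) (u := ⟨u, hu⟩) (v := ⟨v, hv⟩) hadj
      simpa using congrArg (Coprod.inr : RAAG (Γ.induce Sᶜ) →* C) this
  set φ : RAAG Γ →* C := PresentedGroup.toGroup (lift_rels f hfrel) with hφ
  -- backward maps
  have hl : ∀ u v : S, (Γ.induce S).Adj u v →
      RAAG.of Γ u * RAAG.of Γ v * (RAAG.of Γ u)⁻¹ * (RAAG.of Γ v)⁻¹ = 1 :=
    fun u v h => raag_comm h
  have hr : ∀ u v : (Sᶜ : Set V), (Γ.induce Sᶜ).Adj u v →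
      RAAG.of Γ u * RAAG.of Γ v * (RAAG.of Γ u)⁻¹ * (RAAG.of Γ v)⁻¹ = 1 :=
    fun u v h => raag_comm h
  set ψl : RAAG (Γ.induce S) →* RAAG Γ :=
    PresentedGroup.toGroup (lift_rels _ hl) with hψl
  set ψr : RAAG (Γ.induce Sᶜ) →* RAAG Γ :=
    PresentedGroup.toGroup (lift_rels _ hr) with hψr
  set ψ : C →* RAAG Γ := Coprod.lift ψl ψr with hψ
  have hφof : ∀ v, φ (RAAG.of Γ v) = f v := fun v => PresentedGroup.toGroup.of _
  have h1 : ψ.comp φ = MonoidHom.id _ := by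
    ext v
    simp only [MonoidHom.comp_apply, MonoidHom.id_apply]
    show ψ (φ (RAAG.of Γ v)) = RAAG.of Γ v
    rw [hφof]
    by_cases h : v ∈ S
    · rw [hfS v h]
      rw [hψ, Coprod.lift_apply_inl]
      exact PresentedGroup.toGroup.of _
    · rw [hfSc v h]
      rw [hψ, Coprod.lift_apply_inr]
      exact PresentedGroup.toGroup.of _
  have h2 : φ.comp ψ = MonoidHom.id _ := by
    apply Coprod.hom_ext
    · ext v
      simp only [MonoidHom.comp_apply, MonoidHom.id_apply]
      show φ (ψ (Coprod.inl (RAAG.of _ v))) = Coprod.inl (RAAG.of _ v)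
      have : ψ (Coprod.inl (RAAG.of (Γ.induce S) v)) = RAAG.of Γ v := by
        rw [hψ, Coprod.lift_apply_inl]; exact PresentedGroup.toGroup.of _
      rw [this, hφof, hfS v v.2]
    · ext v
      simp only [MonoidHom.comp_apply, MonoidHom.id_apply]
      show φ (ψ (Coprod.inr (RAAG.of _ v))) = Coprod.inr (RAAG.of _ v)
      have : ψ (Coprod.inr (RAAG.of (Γ.induce Sᶜ) v)) = RAAG.of Γ v := by
        rw [hψ, Coprod.lift_apply_inr]; exact PresentedGroup.toGroup.of _
      rw [this, hφof, hfSc v v.2]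
  refine ⟨MonoidHom.toMulEquiv φ ψ h1 h2, ?_, ?_⟩
  · intro v h
    simpa [MonoidHom.toMulEquiv] using (hφof v).trans (hfS v h)
  · intro v h
    simpa [MonoidHom.toMulEquiv] using (hφof v).trans (hfSc v h)
end

section
/- Let G be a finitely generated group and let H be a subgroup of G of finite index n. Then the intersection K of all subgroups of G of index n is a characteristic subgroup of G of finite index. In particular, every finite-index subgroup of a finitely generated group contains a characteristic finite-index subgroup. -/
/-- Conjugation of permutations by an equivalence, as a monoid hom. -/
def permCongrMonoidHom {α β : Type*} (e : α ≃ β) :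
    Equiv.Perm α →* Equiv.Perm β where
  toFun := e.permCongr
  map_one' := by ext x; simp
  map_mul' p q := by
    ext x
    simp [Equiv.Perm.mul_apply]

/-- Homomorphisms from a finitely generated group into a finite group form a
finite type. -/
lemma finite_monoidHom_of_fg (G P : Type*) [Group G] [Group.FG G] [Group P]
    [Finite P] : Finite (G →* P) := by
  obtain ⟨S, hS⟩ := Group.FG.out (G := G)
  have hinj : Function.Injective fun (f : G →* P) (s : S) => f s := by
    intro f g h
    exact MonoidHom.eq_of_eqOn_dense hS fun x hx => congrFun h ⟨x, hx⟩
  exact Finite.of_injective _ hinj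

/-- In a finitely generated group, there are only finitely many subgroups of
any given nonzero index `n`. -/
lemma finite_setOf_index_eq (G : Type*) [Group G] [Group.FG G] {n : ℕ}
    (hn : n ≠ 0) : {K : Subgroup G | K.index = n}.Finite := by
  rw [← Set.finite_coe_iff]
  have : ∀ K : {K : Subgroup G | K.index = n}, Finite (G ⧸ (K : Subgroup G)) := by
    intro K
    exact (Subgroup.fintypeOfIndexNeZero (K.2.trans_ne hn)).finite
  -- choose an equivalence with `Fin n` for each such subgroup
  have hcard : ∀ K : {K : Subgroup G | K.index = n},
      Nat.card (G ⧸ (K : Subgroup G)) = n := by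
    intro K
    rw [← Subgroup.index_eq_card]
    exact K.2
  haveI := finite_monoidHom_of_fg G (Equiv.Perm (Fin n))
  set e : ∀ K : {K : Subgroup G | K.index = n},
      G ⧸ (K : Subgroup G) ≃ Fin n := fun K => Finite.equivFinOfCardEq (hcard K)
  set f : {K : Subgroup G | K.index = n} → (G →* Equiv.Perm (Fin n)) × Fin n :=
    fun K => ⟨(permCongrMonoidHom (e K)).comp
        (MulAction.toPermHom G (G ⧸ (K : Subgroup G))),
      e K (QuotientGroup.mk (1 : G))⟩
  have key : ∀ (K : {K : Subgroup G | K.index = n}) (g : G),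
      g ∈ (K : Subgroup G) ↔ (f K).1 g (f K).2 = (f K).2 := by
    intro K g
    show _ ↔ (e K).permCongr (MulAction.toPermHom G (G ⧸ (K : Subgroup G)) g)
        (e K (QuotientGroup.mk 1)) = e K (QuotientGroup.mk 1)
    rw [Equiv.permCongr_apply, Equiv.symm_apply_apply, Equiv.apply_eq_iff_eq]
    rw [MulAction.toPermHom_apply, MulAction.toPerm_apply,
      MulAction.Quotient.smul_mk, QuotientGroup.eq]
    simp
  have hinj : Function.Injective f := by
    intro K K' h
    have : ∀ g : G, g ∈ (K : Subgroup G) ↔ g ∈ (K' : Subgroup G) := by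
      intro g
      rw [key K g, key K' g, h]
    exact Subtype.ext (SetLike.ext this)
  exact Finite.of_injective f hinj

/-- In a finitely generated group, the intersection of all subgroups of a given
finite index `n = H.index` is a characteristic subgroup of finite index. In
particular every finite-index subgroup of a finitely generated group contains
a characteristic finite-index subgroup. -/
theorem characteristic_finite_index_intersection (G : Type*) [Group G]
    [Group.FG G] (H : Subgroup G) [H.FiniteIndex] :
    (⨅ K ∈ {K : Subgroup G | K.index = H.index}, K).Characteristic ∧
      (⨅ K ∈ {K : Subgroup G | K.index = H.index}, K).FiniteIndex := by
  have hn : H.index ≠ 0 := Subgroup.FiniteIndex.index_ne_zero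
  have hfin : {K : Subgroup G | K.index = H.index}.Finite :=
    finite_setOf_index_eq G hn
  constructor
  · rw [Subgroup.characteristic_iff_comap_eq]
    intro φ
    simp only [Subgroup.comap_iInf]
    apply le_antisymm
    · refine le_iInf₂ fun K hK => ?_
      have hK' : (K.comap φ.symm.toMonoidHom).index = H.index := by
        rw [Subgroup.index_comap_of_surjective _ φ.symm.surjective]; exact hK
      have := iInf₂_le (f := fun (K : Subgroup G) (_ : K.index = H.index) =>
        K.comap φ.toMonoidHom) (K.comap φ.symm.toMonoidHom) hK'
      refine this.trans_eq ?_
      rw [Subgroup.comap_comap]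
      convert Subgroup.comap_id K using 2
      ext x
      simp
    · refine le_iInf₂ fun K hK => ?_
      have hK' : (K.comap φ.toMonoidHom).index = H.index := by
        rw [Subgroup.index_comap_of_surjective _ φ.surjective]; exact hK
      exact iInf₂_le (f := fun (K : Subgroup G) (_ : K.index = H.index) => K)
        (K.comap φ.toMonoidHom) hK'
  · haveI : Finite {K : Subgroup G | K.index = H.index} := hfin.to_subtype
    rw [iInf_subtype']
    refine Subgroup.finiteIndex_iInf fun K => ?_
    exact ⟨K.2.trans_ne hn⟩
end

section
/- Let A be a type and let (S_n)_{n ∈ ℕ} be a countable family of subsets of A with the following property: for every sequence a : ℕ → A there exists an index n such that a r ∈ S_n for infinitely many r. Then finitely many of the sets suffice to cover A: there exists N ∈ ℕ such that every element of A belongs to S_n for some n ≤ N. -/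
/-- The compactness argument underlying the finiteness of the higher rank
Makanin–Razborov diagram: if `(S n)` is a countable family of subsets of `A`
such that every sequence in `A` lies in some `S n` for infinitely many indices,
then finitely many of the sets `S n` cover `A`. -/
theorem finite_subcover_of_frequently (A : Type*) (S : ℕ → Set A)
    (h : ∀ a : ℕ → A, ∃ n : ℕ, ∃ᶠ r in Filter.atTop, a r ∈ S n) :
    ∃ N : ℕ, ∀ x : A, ∃ n ≤ N, x ∈ S n := by
  by_contra h'
  push_neg at h'
  choose a ha using h'
  obtain ⟨n, hn⟩ := h a
  obtain ⟨r, hr, hge⟩ := (hn.and_eventually (Filter.eventually_ge_atTop n)).exists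
  exact ha r n hge hr
end
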